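/- Let y : [0,∞) → E be a nonconformity flow trajectory, let m > 0 and t₀ ≥ 0, and assume ‖∇S(y(t))‖ ≥ m for all t ≥ t₀. Then y(t) converges as t → ∞ to a unique limit point y_∞ ∈ E, and this limit satisfies S(y_∞) = τ, i.e. y_∞ lies in the level set {z ∈ E : S(z) = τ}. -/

import Mathlib

open scoped RealInnerProductSpace

/-- The nonconformity velocity field
`v(y) = -λ (S y - τ) ∇S(y) / ‖∇S(y)‖²`. -/
noncomputable def ncVel {n : ℕ} (S : EuclideanSpace ℝ (Fin n) → ℝ) (τ lam : ℝ)
    (y : EuclideanSpace ℝ (Fin n)) : EuclideanSpace ℝ (Fin n) :=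
  (-lam * (S y - τ) / ‖gradient S y‖ ^ 2) • gradient S y

/-!
Along the flow the gap `g t = S (y t) - τ` satisfies `g' = ⟪∇S, v⟫ = -λ g`, so it decays like
`e^{-λ t}`. Once `‖∇S‖ ≥ m`, the speed `‖v‖ = λ |g| / ‖∇S‖` is at most `(λ / m) |g|`, hence
integrable on `[t₀, ∞)`; so `y` has a limit, at which `S = τ` by continuity.
-/

open Real Set Filter Topology MeasureTheory

theorem exists_tendsto_atTop_of_norm_deriv_le_integrableOn
    {E : Type*} [NormedAddCommGroup E] [NormedSpace ℝ E] [CompleteSpace E]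
    {f f' : ℝ → E} {g : ℝ → ℝ} {a : ℝ}
    (hf : ∀ x ∈ Ioi a, HasDerivAt f (f' x) x) (hbound : ∀ x ∈ Ioi a, ‖f' x‖ ≤ g x)
    (hg : IntegrableOn g (Ioi a)) : ∃ l, Tendsto f atTop (𝓝 l) := by
  have hderiv : EqOn f' (deriv f) (Ioi a) := fun x hx => (hf x hx).deriv.symm
  have hint : IntegrableOn (deriv f) (Ioi a) :=
    hg.mono' (aestronglyMeasurable_deriv f _) <|
      (ae_restrict_iff' measurableSet_Ioi).mpr <| .of_forall fun x hx => hderiv hx ▸ hbound x hx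
  exact ⟨_, tendsto_limUnder_of_hasDerivAt_of_integrableOn_Ioi hf
    (hint.congr_fun hderiv.symm measurableSet_Ioi)⟩

theorem eq_mul_exp_of_hasDerivAt_const_mul {f : ℝ → ℝ} {a c : ℝ}
    (hf : ∀ t ∈ Ici a, HasDerivAt f (c * f t) t) :
    ∀ t ∈ Ici a, f t = f a * exp (c * (t - a)) := by
  have hconst : ∀ t ∈ Ici a, HasDerivAt (fun s => f s * exp (-(c * (s - a)))) 0 t := by
    intro t ht
    have he : HasDerivAt (fun s => exp (-(c * (s - a)))) (exp (-(c * (t - a))) * -c) t :=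
      (((hasDerivAt_id t).sub_const a).const_mul c).neg.exp.congr_deriv (by simp)
    refine ((hf t ht).mul he).congr_deriv ?_
    ring
  intro t ht
  have := constant_of_has_deriv_right_zero
    (fun s hs => (hconst s hs.1).continuousAt.continuousWithinAt)
    (fun s hs => (hconst s hs.1).hasDerivWithinAt) t ⟨ht, le_rfl⟩
  simp only [sub_self, mul_zero, neg_zero, exp_zero, mul_one] at this
  rw [← this, mul_assoc, ← exp_add]
  simp

theorem integrableOn_exp_neg_mul_sub_Ioi {c : ℝ} (hc : 0 < c) (a : ℝ) :
    IntegrableOn (fun x => exp (-c * (x - a))) (Ioi a) := by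
  refine IntegrableOn.congr_fun ((integrableOn_exp_mul_Ioi (neg_neg_of_pos hc) a).const_mul
    (exp (c * a))) (fun x _ => ?_) measurableSet_Ioi
  rw [← exp_add]
  ring_nf

section ncVel

variable {n : ℕ} {S : EuclideanSpace ℝ (Fin n) → ℝ} {τ lam : ℝ}

theorem inner_gradient_ncVel {z : EuclideanSpace ℝ (Fin n)} (hz : gradient S z ≠ 0) :
    ⟪gradient S z, ncVel S τ lam z⟫ = -lam * (S z - τ) := by
  rw [ncVel, real_inner_smul_right, real_inner_self_eq_norm_sq,
    div_mul_cancel₀ _ (pow_ne_zero 2 (norm_ne_zero_iff.mpr hz))]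

theorem norm_ncVel (z : EuclideanSpace ℝ (Fin n)) :
    ‖ncVel S τ lam z‖ = |lam| * |S z - τ| / ‖gradient S z‖ := by
  rw [ncVel, norm_smul, Real.norm_eq_abs, abs_div, abs_mul, abs_neg, abs_pow, abs_norm]
  rcases eq_or_ne ‖gradient S z‖ 0 with h | h
  · simp [h]
  · field_simp

theorem norm_ncVel_le {z : EuclideanSpace ℝ (Fin n)} {m : ℝ} (hm : 0 < m)
    (hz : m ≤ ‖gradient S z‖) : ‖ncVel S τ lam z‖ ≤ |lam| * |S z - τ| / m := by
  rw [norm_ncVel]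
  exact div_le_div_of_nonneg_left (by positivity) hm hz

theorem HasDerivAt.sub_level_of_ncVel {y : ℝ → EuclideanSpace ℝ (Fin n)} {t : ℝ}
    (hS : DifferentiableAt ℝ S (y t)) (hy : HasDerivAt y (ncVel S τ lam (y t)) t)
    (hgrad : gradient S (y t) ≠ 0) :
    HasDerivAt (fun s => S (y s) - τ) (-lam * (S (y t) - τ)) t := by
  have := (hS.hasGradientAt.hasFDerivAt.comp_hasDerivAt t hy).sub_const τ
  rwa [InnerProductSpace.toDual_apply_apply, inner_gradient_ncVel hgrad] at this

end ncVel

theorem trajectory_converges_to_boundary_general {n : ℕ} (S : EuclideanSpace ℝ (Fin n) → ℝ)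
    (hS : Differentiable ℝ S) (τ lam : ℝ) (hlam : 0 < lam)
    (y : ℝ → EuclideanSpace ℝ (Fin n))
    (hy : ∀ t : ℝ, 0 ≤ t → HasDerivAt y (ncVel S τ lam (y t)) t)
    (m t₀ : ℝ) (hm : 0 < m) (ht₀ : 0 ≤ t₀)
    (hlow : ∀ t : ℝ, t₀ ≤ t → m ≤ ‖gradient S (y t)‖) :
    ∃! yinf : EuclideanSpace ℝ (Fin n),
      Filter.Tendsto y Filter.atTop (nhds yinf) ∧ S yinf = τ := by
  set gap : ℝ → ℝ := fun t => S (y t) - τ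
  have hgap : ∀ t ∈ Ici t₀, gap t = gap t₀ * exp (-lam * (t - t₀)) :=
    eq_mul_exp_of_hasDerivAt_const_mul fun t ht => (hy t (ht₀.trans ht)).sub_level_of_ncVel
      (hS _) (norm_pos_iff.mp (hm.trans_le (hlow t ht)))
  have hspeed : ∀ t ∈ Ioi t₀,
      ‖ncVel S τ lam (y t)‖ ≤ lam * |gap t₀| / m * exp (-lam * (t - t₀)) := fun t ht => by
    calc ‖ncVel S τ lam (y t)‖ ≤ |lam| * |gap t| / m := norm_ncVel_le hm (hlow t ht.le)
      _ = lam * |gap t₀| / m * exp (-lam * (t - t₀)) := by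
        rw [hgap t (Ioi_subset_Ici_self ht), abs_mul, abs_exp, abs_of_pos hlam]; ring
  obtain ⟨yinf, hyinf⟩ := exists_tendsto_atTop_of_norm_deriv_le_integrableOn
    (fun t ht => hy t (ht₀.trans ht.le)) hspeed
    ((integrableOn_exp_neg_mul_sub_Ioi hlam t₀).const_mul _)
  have hgap_lim : Tendsto gap atTop (𝓝 0) := by
    have hexp : Tendsto (fun t => exp (-lam * (t - t₀))) atTop (𝓝 0) :=
      tendsto_exp_atBot.comp <| (tendsto_id.atTop_add tendsto_const_nhds).const_mul_atTop_of_neg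
        (neg_neg_of_pos hlam)
    simpa using (hexp.const_mul (gap t₀)).congr' <|
      (eventually_ge_atTop t₀).mono fun t ht => (hgap t ht).symm
  have hS_lim : Tendsto gap atTop (𝓝 (S yinf - τ)) :=
    ((hS yinf).continuousAt.tendsto.comp hyinf).sub_const τ
  exact ⟨yinf, ⟨hyinf, sub_eq_zero.mp (tendsto_nhds_unique hS_lim hgap_lim)⟩,
    fun z hz => tendsto_nhds_unique hz.1 hyinf⟩

/-- if `‖∇S(y(t))‖ ≥ m > 0` for all `t ≥ t₀`, the trajectory
converges to a unique limit `y_∞`, which lies in the level set `{z : S z = τ}`. -/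
theorem trajectory_converges_to_boundary {n : ℕ} (S : EuclideanSpace ℝ (Fin n) → ℝ)
    (hS : Differentiable ℝ S) (τ lam : ℝ) (hlam : 0 < lam)
    (y : ℝ → EuclideanSpace ℝ (Fin n))
    (hy : ∀ t : ℝ, 0 ≤ t → HasDerivAt y (ncVel S τ lam (y t)) t)
    (hgrad : ∀ t : ℝ, 0 ≤ t → gradient S (y t) ≠ 0)
    (m t₀ : ℝ) (hm : 0 < m) (ht₀ : 0 ≤ t₀)
    (hlow : ∀ t : ℝ, t₀ ≤ t → m ≤ ‖gradient S (y t)‖) :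
    ∃! yinf : EuclideanSpace ℝ (Fin n),
      Filter.Tendsto y Filter.atTop (nhds yinf) ∧ S yinf = τ :=
  trajectory_converges_to_boundary_general S hS τ lam hlam y hy m t₀ hm ht₀ hlow
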